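/- arXiv:0812.1208 — 2 statements merged into one kernel-verified Lean document; each statement's English description precedes it below -/
import Mathlib

section
/- Define B(n,k) for integers 0 ≤ k ≤ n by B(n,0) = B(n,n) = 1 and B(n,k) = 2·B(n-1,k) + B(n-1,k-1) for 0 < k < n. Then for all 0 < k ≤ n, B(n,k) = ∑_{i=k}^{n} C(n,i)·C(i-1,k-1). -/
private lemma shift_sum (a b : ℕ) (f : ℕ → ℕ) :
    ∑ j ∈ Finset.Icc (a+1) (b+1), f j = ∑ j ∈ Finset.Icc a b, f (j+1) := by
  rw [← Finset.map_add_right_Icc a b 1, Finset.sum_map]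
  rfl

theorem stmt_0 (B : ℕ → ℕ → ℕ)
    (h0 : ∀ n, B n 0 = 1) (hn : ∀ n, B n n = 1)
    (hrec : ∀ n k, 0 < k → k < n → B n k = 2 * B (n - 1) k + B (n - 1) (k - 1)) :
    ∀ n k, 0 < k → k ≤ n →
      B n k = ∑ i ∈ Finset.Icc k n, n.choose i * (i - 1).choose (k - 1) := by
  intro n
  induction n with
  | zero => intro k hk hkn; omega
  | succ n ih =>
    intro k hk hkn
    rcases Nat.lt_or_ge k (n+1) with hlt | hge
    · -- k ≤ n
      obtain ⟨m, rfl⟩ : ∃ m, k = m + 1 := ⟨k-1, by omega⟩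
      have hmn : m + 1 ≤ n := by omega
      obtain ⟨t, rfl⟩ : ∃ t, n = t + 1 := ⟨n-1, by omega⟩
      rw [hrec _ _ hk hlt]
      simp only [Nat.add_sub_cancel]
      rw [ih (m+1) hk hmn]
      rw [shift_sum, shift_sum m (t+1)]
      simp only [Nat.add_sub_cancel]
      -- RHS split by Pascal
      have pas : ∀ j ∈ Finset.Icc m (t+1),
          (t+1+1).choose (j+1) * j.choose m
          = (t+1).choose j * j.choose m + (t+1).choose (j+1) * j.choose m := by
        intro j _
        rw [Nat.choose_succ_succ (t+1) j, Nat.add_mul]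
      rw [Finset.sum_congr rfl pas, Finset.sum_add_distrib]
      have htop : ∑ j ∈ Finset.Icc m (t+1), (t+1).choose (j+1) * j.choose m
          = ∑ j ∈ Finset.Icc m t, (t+1).choose (j+1) * j.choose m := by
        rw [Finset.sum_Icc_succ_top (by omega : m ≤ t + 1)]
        have : (t+1).choose (t+1+1) = 0 := Nat.choose_eq_zero_of_lt (by omega)
        simp [this]
      rw [htop]
      -- remains: 2*S + B(t+1) m = T + S where
      -- T = ∑_{Icc m (t+1)} (t+1).choose j * j.choose m
      have key : ∑ j ∈ Finset.Icc m (t+1), (t+1).choose j * j.choose m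
          = B (t+1) m + ∑ j ∈ Finset.Icc m t, (t+1).choose (j+1) * j.choose m := by
        rcases m with _ | p
        · -- m = 0
          rw [h0]
          have h1 : Finset.Icc 0 (t+1) = Finset.range (t+2) := by
            ext x; simp [Nat.lt_succ_iff]
          have h2 : Finset.Icc 0 t = Finset.range (t+1) := by
            ext x; simp [Nat.lt_succ_iff]
          rw [h1, h2]
          simp only [Nat.choose_zero_right, Nat.mul_one]
          rw [Nat.sum_range_choose]
          have h3 := Finset.sum_range_succ' (fun j => (t+1).choose j) (t+1)
          rw [Nat.sum_range_choose] at h3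
          simp only [Nat.choose_zero_right] at h3
          linarith
        · -- m = p+1
          have hBm : B (t+1) (p+1) = ∑ l ∈ Finset.Icc p t, (t+1).choose (l+1) * l.choose p := by
            rw [ih (p+1) (Nat.succ_pos p) (by omega), shift_sum]
            simp only [Nat.add_sub_cancel]
          rw [hBm, shift_sum]
          have pas2 : ∀ l ∈ Finset.Icc p t,
              (t+1).choose (l+1) * (l+1).choose (p+1)
              = (t+1).choose (l+1) * l.choose p + (t+1).choose (l+1) * l.choose (p+1) := by
            intro l _
            rw [Nat.choose_succ_succ l p, Nat.mul_add]
          rw [Finset.sum_congr rfl pas2, Finset.sum_add_distrib]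
          congr 1
          -- ∑_{Icc p t} (t+1).choose(l+1)*l.choose(p+1) = ∑_{Icc (p+1) t} ...
          have hins : Finset.Icc p t = insert p (Finset.Icc (p+1) t) := by
            ext x
            simp only [Finset.mem_Icc, Finset.mem_insert]
            omega
          rw [hins, Finset.sum_insert (by simp)]
          have : p.choose (p+1) = 0 := Nat.choose_eq_zero_of_lt (by omega)
          simp [this]
      rw [key]
      ring
    · -- k = n+1
      have hk' : k = n + 1 := by omega
      subst hk'
      rw [hn, Finset.Icc_self, Finset.sum_singleton, Nat.choose_self]
      simp [Nat.choose_self]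
end

section
/- For n ≥ 4 and 4 ≤ k < n (so that all parabolic data are defined), the branching identity for Betti numbers holds at the level of dimensions: B(n,k) = 2·B(n-1,k) + B(n-1,k-1), where B(n,k) = ∑_{e=0}^{n-k} C(n, k+e)·C(k+e-1, e). -/
lemma key17 (m c : ℕ) :
    ∑ e ∈ Finset.range (c+2), (m+c+3).choose (m+2+e) * (m+1+e).choose e
    = 2 * ∑ e ∈ Finset.range (c+1), (m+c+2).choose (m+2+e) * (m+1+e).choose e
    + ∑ e ∈ Finset.range (c+2), (m+c+2).choose (m+1+e) * (m+e).choose e := by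
  have pas : ∀ e, (m+c+3).choose (m+2+e)
      = (m+c+2).choose (m+1+e) + (m+c+2).choose (m+2+e) := by
    intro e
    rw [show m+c+3 = (m+c+2)+1 by omega, show m+2+e = (m+1+e)+1 by omega,
      Nat.choose_succ_succ]
  have hsplit : ∑ e ∈ Finset.range (c+2), (m+c+3).choose (m+2+e) * (m+1+e).choose e
      = (∑ e ∈ Finset.range (c+2), (m+c+2).choose (m+1+e) * (m+1+e).choose e)
      + ∑ e ∈ Finset.range (c+2), (m+c+2).choose (m+2+e) * (m+1+e).choose e := by
    rw [← Finset.sum_add_distrib]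
    refine Finset.sum_congr rfl fun e _ => ?_
    rw [pas e, add_mul]
  rw [hsplit]
  -- truncate the last sum: top term vanishes
  have htr : ∑ e ∈ Finset.range (c+2), (m+c+2).choose (m+2+e) * (m+1+e).choose e
      = ∑ e ∈ Finset.range (c+1), (m+c+2).choose (m+2+e) * (m+1+e).choose e := by
    rw [Finset.sum_range_succ]
    have : (m+c+2).choose (m+2+(c+1)) = 0 := Nat.choose_eq_zero_of_lt (by omega)
    rw [this]; simp
  rw [htr]
  -- now handle S2 := ∑ e ∈ range (c+2), C(m+c+2, m+1+e) * C(m+1+e, e)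
  have hS2 : ∑ e ∈ Finset.range (c+2), (m+c+2).choose (m+1+e) * (m+1+e).choose e
      = (∑ e ∈ Finset.range (c+1), (m+c+2).choose (m+2+e) * (m+1+e).choose e)
      + ∑ e ∈ Finset.range (c+2), (m+c+2).choose (m+1+e) * (m+e).choose e := by
    rw [Finset.sum_range_succ' (fun e => (m+c+2).choose (m+1+e) * (m+1+e).choose e) (c+1)]
    rw [Finset.sum_range_succ' (fun e => (m+c+2).choose (m+1+e) * (m+e).choose e) (c+1)]
    have hterm : ∀ j, (m+c+2).choose (m+1+(j+1)) * (m+1+(j+1)).choose (j+1)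
        = (m+c+2).choose (m+2+j) * (m+1+j).choose j
        + (m+c+2).choose (m+1+(j+1)) * (m+(j+1)).choose (j+1) := by
      intro j
      have h1 : m+1+(j+1) = m+2+j := by omega
      have h2 : (m+1+(j+1)).choose (j+1) = (m+1+j).choose j + (m+(j+1)).choose (j+1) := by
        rw [show m+1+(j+1) = (m+1+j)+1 by omega, Nat.choose_succ_succ]
        congr 2
        omega
      rw [h2, mul_add, h1]
    rw [Finset.sum_congr rfl fun j _ => hterm j, Finset.sum_add_distrib]
    simp [Nat.choose_zero_right]
    ring
  rw [hS2]
  ring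

theorem stmt_17 (n k : ℕ) (hn : 4 ≤ n) (hk : 4 ≤ k) (hkn : k < n)
    (B : ℕ → ℕ → ℕ)
    (hB : ∀ m l, B m l = ∑ e ∈ Finset.range (m - l + 1),
      m.choose (l + e) * (l + e - 1).choose e) :
    B n k = 2 * B (n - 1) k + B (n - 1) (k - 1) := by
  obtain ⟨m, c, rfl, rfl⟩ : ∃ m c, k = m + 2 ∧ n = m + c + 3 :=
    ⟨k - 2, n - k - 1, by omega, by omega⟩
  rw [hB, hB, hB]
  have e1 : m + c + 3 - (m + 2) + 1 = c + 2 := by omega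
  have e2 : m + c + 3 - 1 - (m + 2) + 1 = c + 1 := by omega
  have e3 : m + c + 3 - 1 - (m + 2 - 1) + 1 = c + 2 := by omega
  rw [e1, e2, e3]
  have L : ∑ e ∈ Finset.range (c+2), (m+c+3).choose (m+2+e) * (m+2+e-1).choose e
      = ∑ e ∈ Finset.range (c+2), (m+c+3).choose (m+2+e) * (m+1+e).choose e := by
    refine Finset.sum_congr rfl fun e _ => ?_
    congr 2
    omega
  have R1 : ∑ e ∈ Finset.range (c+1), (m+c+3-1).choose (m+2+e) * (m+2+e-1).choose e
      = ∑ e ∈ Finset.range (c+1), (m+c+2).choose (m+2+e) * (m+1+e).choose e := by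
    refine Finset.sum_congr rfl fun e _ => ?_
    congr 2 <;> omega
  have R2 : ∑ e ∈ Finset.range (c+2), (m+c+3-1).choose (m+2-1+e) * (m+2-1+e-1).choose e
      = ∑ e ∈ Finset.range (c+2), (m+c+2).choose (m+1+e) * (m+e).choose e := by
    refine Finset.sum_congr rfl fun e _ => ?_
    congr 2 <;> omega
  rw [L, R1, R2]
  exact key17 m c
end
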